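/- The eight elements λ₁,…,λ₈ of Cl(4,1) defined via the idempotents f₁,…,f₄ (for example λ₁ = (σ₃ + σ₀σ₂)/2, λ₃ = (σ₀σ₁σ₄ - σ₁σ₂σ₃σ₄)/2, λ₈ = (2σ₀σ₂σ₃ + σ₀σ₁σ₄ + σ₁σ₂σ₃σ₄)/(2√3)) satisfy the commutation relation [λ₁, λ₂] = 2 i λ₃, where i is the pseudoscalar σ₀σ₁σ₂σ₃σ₄ (playing the role of the complex imaginary). -/
import Mathlib


noncomputable def Q41 : QuadraticForm ℝ (Fin 5 → ℝ) :=
  QuadraticMap.weightedSumSquares ℝ (fun i : Fin 5 => if i = 0 then (-1 : ℝ) else 1)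

noncomputable def σ (ι : Fin 5) : CliffordAlgebra Q41 :=
  CliffordAlgebra.ι Q41 (Pi.single ι 1)

noncomputable def lam₁ : CliffordAlgebra Q41 := (2⁻¹ : ℝ) • (σ 3 + σ 0 * σ 2)
noncomputable def lam₂ : CliffordAlgebra Q41 := (2⁻¹ : ℝ) • (-σ 2 + σ 0 * σ 3)
noncomputable def lam₃ : CliffordAlgebra Q41 :=
  (2⁻¹ : ℝ) • (σ 0 * σ 1 * σ 4 - σ 1 * σ 2 * σ 3 * σ 4)
noncomputable def pseudo : CliffordAlgebra Q41 := σ 0 * σ 1 * σ 2 * σ 3 * σ 4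

lemma Q41_single (i : Fin 5) : Q41 (Pi.single i 1) = if i = 0 then (-1:ℝ) else 1 := by
  simp [Q41, QuadraticMap.weightedSumSquares_apply, Pi.single_apply]

lemma sq0 : σ 0 * σ 0 = -1 := by
  rw [σ, CliffordAlgebra.ι_sq_scalar, Q41_single]; simp

lemma sqP (i : Fin 5) (h : i ≠ 0) : σ i * σ i = 1 := by
  rw [σ, CliffordAlgebra.ι_sq_scalar, Q41_single, if_neg h]; simp

lemma sq0' (x : CliffordAlgebra Q41) : σ 0 * (σ 0 * x) = -x := by
  rw [← mul_assoc, sq0, neg_one_mul]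

lemma sqP' (i : Fin 5) (h : i ≠ 0) (x : CliffordAlgebra Q41) : σ i * (σ i * x) = x := by
  rw [← mul_assoc, sqP i h, one_mul]

lemma swap (i j : Fin 5) (h : j < i) : σ i * σ j = -(σ j * σ i) := by
  apply CliffordAlgebra.ι_mul_ι_comm_of_isOrtho
  rw [QuadraticMap.IsOrtho]
  simp [Q41, QuadraticMap.weightedSumSquares_apply, Pi.single_apply, Fin.sum_univ_five]
  fin_cases i <;> fin_cases j <;> simp_all

lemma swap' (i j : Fin 5) (h : j < i) (x : CliffordAlgebra Q41) :
    σ i * (σ j * x) = -(σ j * (σ i * x)) := by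
  rw [← mul_assoc, swap i j h, neg_mul, mul_assoc]

/-- The Gell-Mann-type generators satisfy [λ₁, λ₂] = 2 i λ₃. -/
theorem gellmann_commutator : lam₁ * lam₂ - lam₂ * lam₁ = 2 * (pseudo * lam₃) := by
  have h01 := swap 1 0 (by decide)
  have h02 := swap 2 0 (by decide)
  have h03 := swap 3 0 (by decide)
  have h04 := swap 4 0 (by decide)
  have h12 := swap 2 1 (by decide)
  have h13 := swap 3 1 (by decide)
  have h14 := swap 4 1 (by decide)
  have h23 := swap 3 2 (by decide)
  have h24 := swap 4 2 (by decide)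
  have h34 := swap 4 3 (by decide)
  have h01' := swap' 1 0 (by decide)
  have h02' := swap' 2 0 (by decide)
  have h03' := swap' 3 0 (by decide)
  have h04' := swap' 4 0 (by decide)
  have h12' := swap' 2 1 (by decide)
  have h13' := swap' 3 1 (by decide)
  have h14' := swap' 4 1 (by decide)
  have h23' := swap' 3 2 (by decide)
  have h24' := swap' 4 2 (by decide)
  have h34' := swap' 4 3 (by decide)
  have s1 := sqP 1 (by decide)
  have s2 := sqP 2 (by decide)
  have s3 := sqP 3 (by decide)
  have s4 := sqP 4 (by decide)
  have s1' := sqP' 1 (by decide)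
  have s2' := sqP' 2 (by decide)
  have s3' := sqP' 3 (by decide)
  have s4' := sqP' 4 (by decide)
  simp only [lam₁, lam₂, lam₃, pseudo, smul_mul_assoc, mul_smul_comm, smul_smul,
    mul_add, add_mul, mul_sub, sub_mul, mul_neg, neg_mul, neg_neg, mul_assoc,
    h01, h02, h03, h04, h12, h13, h14, h23, h24, h34,
    h01', h02', h03', h04', h12', h13', h14', h23', h24', h34',
    s1, s2, s3, s4, s1', s2', s3', s4', sq0, sq0',
    mul_one, one_mul, smul_neg, smul_add, smul_sub, two_mul]

  module
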